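/- arXiv:2101.11199 — 3 statements merged into one kernel-verified Lean document; each statement's English description precedes it below -/
import Mathlib

section
/- Let 1 ≤ b < ∞, Ω_b = {(x̄, x₃) : x̄ ∈ ℝ², 0 ≤ x₃ < b}, and f, g ∈ H¹(Ω_b). Then for every x₃ ∈ [0, b), |∫_{ℝ²} f(x̄, x₃) g(x̄, x₃) dx̄| ≤ ‖∂_{x₃}(f, g)‖_{L²(Ω_b)} ‖(f, g)‖_{L²(Ω_b)} + (1/b) ‖f‖_{L²(Ω_b)} ‖g‖_{L²(Ω_b)}. -/
open Real MeasureTheory Set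

/-- Elementary two-dimensional Cauchy–Schwarz for square roots. -/
lemma sqrt_r2_cs {a b c d : ℝ} (ha : 0 ≤ a) (hb : 0 ≤ b) (hc : 0 ≤ c) (hd : 0 ≤ d) :
    Real.sqrt a * Real.sqrt d + Real.sqrt b * Real.sqrt c ≤
      Real.sqrt (a + b) * Real.sqrt (c + d) := by
  have h1 := Real.sq_sqrt ha
  have h2 := Real.sq_sqrt hb
  have h3 := Real.sq_sqrt hc
  have h4 := Real.sq_sqrt hd
  have h5 := Real.sq_sqrt (add_nonneg ha hb)
  have h6 := Real.sq_sqrt (add_nonneg hc hd)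
  have n1 := Real.sqrt_nonneg a
  have n2 := Real.sqrt_nonneg b
  have n3 := Real.sqrt_nonneg c
  have n4 := Real.sqrt_nonneg d
  have n5 := Real.sqrt_nonneg (a + b)
  have n6 := Real.sqrt_nonneg (c + d)
  nlinarith [sq_nonneg (Real.sqrt a * Real.sqrt c - Real.sqrt b * Real.sqrt d),
    sq_nonneg (Real.sqrt (a + b) * Real.sqrt (c + d) -
      (Real.sqrt a * Real.sqrt d + Real.sqrt b * Real.sqrt c)),
    mul_nonneg n5 n6,
    mul_nonneg (mul_nonneg n1 n4) (mul_nonneg n2 n3)]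

/-- Cauchy–Schwarz for integrals, absolute-value form. -/
lemma integral_abs_mul_le_sqrt {α : Type*} [MeasurableSpace α] {μ : Measure α} {F G : α → ℝ}
    (hF2 : Integrable (fun x => F x ^ 2) μ) (hG2 : Integrable (fun x => G x ^ 2) μ) :
    ∫ x, |F x| * |G x| ∂μ ≤
      Real.sqrt (∫ x, F x ^ 2 ∂μ) * Real.sqrt (∫ x, G x ^ 2 ∂μ) := by
  have hFm : AEMeasurable (fun x => |F x|) μ := by
    have h := hF2.aemeasurable
    have h2 : AEMeasurable (fun x => Real.sqrt (F x ^ 2)) μ :=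
      Real.continuous_sqrt.measurable.comp_aemeasurable h
    simpa [Real.sqrt_sq_eq_abs] using h2
  have hGm : AEMeasurable (fun x => |G x|) μ := by
    have h := hG2.aemeasurable
    have h2 : AEMeasurable (fun x => Real.sqrt (G x ^ 2)) μ :=
      Real.continuous_sqrt.measurable.comp_aemeasurable h
    simpa [Real.sqrt_sq_eq_abs] using h2
  have hpq : (2 : ℝ).HolderConjugate 2 := Real.HolderConjugate.two_two
  have h2e : (ENNReal.ofReal (2 : ℝ)) = 2 := by
    simp [ENNReal.ofReal_ofNat]
  have hFLp : MemLp (fun x => |F x|) (ENNReal.ofReal (2 : ℝ)) μ := by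
    rw [h2e]
    refine (memLp_two_iff_integrable_sq hFm.aestronglyMeasurable).2 ?_
    simpa [sq_abs] using hF2
  have hGLp : MemLp (fun x => |G x|) (ENNReal.ofReal (2 : ℝ)) μ := by
    rw [h2e]
    refine (memLp_two_iff_integrable_sq hGm.aestronglyMeasurable).2 ?_
    simpa [sq_abs] using hG2
  have key := integral_mul_le_Lp_mul_Lq_of_nonneg hpq
    (Filter.Eventually.of_forall fun x => abs_nonneg (F x))
    (Filter.Eventually.of_forall fun x => abs_nonneg (G x)) hFLp hGLp
  have hr : ∀ y : ℝ, |y| ^ (2 : ℝ) = y ^ 2 := by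
    intro y
    rw [show (2 : ℝ) = ((2 : ℕ) : ℝ) by norm_num, Real.rpow_natCast, sq_abs]
  simp only [hr] at key
  calc ∫ x, |F x| * |G x| ∂μ
      ≤ (∫ x, F x ^ 2 ∂μ) ^ (1 / (2:ℝ)) * (∫ x, G x ^ 2 ∂μ) ^ (1 / (2:ℝ)) := key
    _ = Real.sqrt (∫ x, F x ^ 2 ∂μ) * Real.sqrt (∫ x, G x ^ 2 ∂μ) := by
        rw [Real.sqrt_eq_rpow, Real.sqrt_eq_rpow]

/-- Slice bound: one-dimensional trace estimate by averaging FTC over `[0,b)`. -/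
lemma slice_bound {b : ℝ} (hb : 0 < b) {φ ψ : ℝ → ℝ}
    (hφ : Differentiable ℝ φ) (hψ : Differentiable ℝ ψ)
    (hI : IntegrableOn (fun t => |φ t| * |ψ t|) (Ico 0 b))
    (hD : IntegrableOn (fun t => |deriv φ t| * |ψ t| + |φ t| * |deriv ψ t|) (Ico 0 b))
    {x₃ : ℝ} (hx : x₃ ∈ Ico 0 b) :
    |φ x₃ * ψ x₃| ≤ (1 / b) * (∫ t in Ico 0 b, |φ t| * |ψ t|) +
      ∫ t in Ico 0 b, (|deriv φ t| * |ψ t| + |φ t| * |deriv ψ t|) := by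
  set P : ℝ → ℝ := fun t => φ t * ψ t with hP_def
  have hP : Differentiable ℝ P := hφ.mul hψ
  have hDP_meas : Measurable (deriv P) := measurable_deriv P
  set bd : ℝ → ℝ := fun t => |deriv φ t| * |ψ t| + |φ t| * |deriv ψ t| with hbd_def
  have hbound : ∀ t, |deriv P t| ≤ bd t := by
    intro t
    have hd : deriv P t = deriv φ t * ψ t + φ t * deriv ψ t := deriv_mul (hφ t) (hψ t)
    rw [hd]
    refine (abs_add_le _ _).trans ?_
    rw [abs_mul, abs_mul]
  have hDP_int : IntegrableOn (deriv P) (Ico 0 b) := by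
    refine Integrable.mono' hD hDP_meas.aestronglyMeasurable ?_
    exact Filter.Eventually.of_forall fun t => by simpa using hbound t
  set C : ℝ := ∫ t in Ico 0 b, bd t with hC_def
  have hbd_nonneg : ∀ t, 0 ≤ bd t := fun t =>
    add_nonneg (mul_nonneg (abs_nonneg _) (abs_nonneg _))
      (mul_nonneg (abs_nonneg _) (abs_nonneg _))
  have hC_nonneg : 0 ≤ C :=
    setIntegral_nonneg measurableSet_Ico fun t _ => hbd_nonneg t
  have key : ∀ t ∈ Ico 0 b, |P x₃| ≤ |P t| + C := by
    intro t ht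
    have hsub : Set.uIcc t x₃ ⊆ Ico 0 b := by
      intro s hs
      rcases hs with ⟨hs1, hs2⟩
      exact ⟨le_trans (le_min ht.1 hx.1) hs1, lt_of_le_of_lt hs2 (max_lt ht.2 hx.2)⟩
    have hIoc_sub : Set.uIoc t x₃ ⊆ Ico 0 b := (Set.uIoc_subset_uIcc).trans hsub
    have hint : IntervalIntegrable (deriv P) volume t x₃ := by
      rw [intervalIntegrable_iff]
      exact hDP_int.mono_set hIoc_sub
    have hFTC : ∫ s in t..x₃, deriv P s = P x₃ - P t :=
      intervalIntegral.integral_deriv_eq_sub (fun s hs => (hP s)) hint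
    have habs : |∫ s in t..x₃, deriv P s| ≤ C := by
      have step3 : ∀ u v : ℝ, u ≤ v → Set.Ioc u v ⊆ Ico 0 b →
          ∫ s in Set.Ioc u v, |deriv P s| ≤ C := by
        intro u v huv hss
        have h1 : ∫ s in Set.Ioc u v, |deriv P s| ≤ ∫ s in Set.Ioc u v, bd s := by
          refine setIntegral_mono_on (IntegrableOn.mono_set hDP_int.abs hss) (hD.mono_set hss)
            measurableSet_Ioc fun s _ => hbound s
        have h2 : ∫ s in Set.Ioc u v, bd s ≤ C := by
          refine setIntegral_mono_set hD
            (Filter.Eventually.of_forall fun s => hbd_nonneg s)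
            (HasSubset.Subset.eventuallyLE hss)
        linarith
      rcases le_total t x₃ with h | h
      · calc |∫ s in t..x₃, deriv P s| ≤ ∫ s in t..x₃, |deriv P s| := by
              simpa using intervalIntegral.norm_integral_le_integral_norm (f := deriv P) h
          _ = ∫ s in Set.Ioc t x₃, |deriv P s| := intervalIntegral.integral_of_le h
          _ ≤ C := step3 t x₃ h (fun s hs => hIoc_sub (by
              rw [Set.uIoc_of_le h]; exact hs))
      · rw [intervalIntegral.integral_symm, abs_neg]
        calc |∫ s in x₃..t, deriv P s| ≤ ∫ s in x₃..t, |deriv P s| := by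
              simpa using intervalIntegral.norm_integral_le_integral_norm (f := deriv P) h
          _ = ∫ s in Set.Ioc x₃ t, |deriv P s| := intervalIntegral.integral_of_le h
          _ ≤ C := step3 x₃ t h (fun s hs => hIoc_sub (by
              rw [Set.uIoc_of_ge h]; exact hs))
    have : |P x₃| = |P t + ∫ s in t..x₃, deriv P s| := by rw [hFTC]; ring_nf
    rw [this]
    exact (abs_add_le _ _).trans (by linarith [habs, le_refl |P t|])
  -- integrate `key` over t ∈ Ico 0 b
  have hvol : (volume (Ico (0:ℝ) b)).toReal = b := by
    rw [Real.volume_Ico, sub_zero, ENNReal.toReal_ofReal hb.le]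
  have hconst : IntegrableOn (fun _ : ℝ => |P x₃|) (Ico 0 b) := by
    exact integrableOn_const (by rw [Real.volume_Ico]; exact ENNReal.ofReal_ne_top)
  have hconstC : IntegrableOn (fun _ : ℝ => C) (Ico 0 b) := by
    exact integrableOn_const (by rw [Real.volume_Ico]; exact ENNReal.ofReal_ne_top)
  have hQ : IntegrableOn (fun t => |φ t| * |ψ t| + C) (Ico 0 b) := hI.add hconstC
  have hmono : ∫ _ in Ico 0 b, |P x₃| ≤ ∫ t in Ico 0 b, (|φ t| * |ψ t| + C) := by
    refine setIntegral_mono_on hconst hQ measurableSet_Ico fun t ht => ?_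
    have h2 := key t ht
    rw [hP_def] at h2
    simp only [abs_mul] at h2
    rw [hP_def]
    simp only [abs_mul]
    exact h2
  rw [setIntegral_const, smul_eq_mul, measureReal_def, hvol] at hmono
  rw [integral_add hI hconstC, setIntegral_const, smul_eq_mul, measureReal_def, hvol] at hmono
  have hPx : |P x₃| ≤ ((∫ t in Ico 0 b, |φ t| * |ψ t|) + b * C) / b := by
    rw [le_div_iff₀ hb]
    linarith
  have heq : ((∫ t in Ico 0 b, |φ t| * |ψ t|) + b * C) / b =
      (1 / b) * (∫ t in Ico 0 b, |φ t| * |ψ t|) + C := by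
    field_simp
  rw [heq] at hPx
  exact hPx

/-- Finite-strip trace inequality (Lemma 8.1 of Guo–Huang–Wang): for `f, g ∈ H¹(Ω_b)`
on the slab `Ω_b = ℝ² × [0,b)`, for every `x₃ ∈ [0,b)`,
`|∫_{ℝ²} f g dx̄| ≤ ‖∂₃(f,g)‖_{L²(Ω_b)} ‖(f,g)‖_{L²(Ω_b)} + (1/b)‖f‖_{L²(Ω_b)}‖g‖_{L²(Ω_b)}`. -/
theorem slab_trace_inequality (b : ℝ) (hb : 1 ≤ b) (f g : ℝ × ℝ → ℝ → ℝ)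
    (μ : Measure ((ℝ × ℝ) × ℝ))
    (hμ : μ = volume.restrict ((Set.univ : Set (ℝ × ℝ)) ×ˢ Set.Ico (0 : ℝ) b))
    (hfd : ∀ xb, Differentiable ℝ (f xb)) (hgd : ∀ xb, Differentiable ℝ (g xb))
    (hf2 : Integrable (fun p : (ℝ × ℝ) × ℝ => (f p.1 p.2) ^ 2) μ)
    (hg2 : Integrable (fun p : (ℝ × ℝ) × ℝ => (g p.1 p.2) ^ 2) μ)
    (hdf2 : Integrable (fun p : (ℝ × ℝ) × ℝ => (deriv (f p.1) p.2) ^ 2) μ)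
    (hdg2 : Integrable (fun p : (ℝ × ℝ) × ℝ => (deriv (g p.1) p.2) ^ 2) μ) :
    ∀ x₃ ∈ Set.Ico (0 : ℝ) b,
      |∫ xb : ℝ × ℝ, f xb x₃ * g xb x₃| ≤
        Real.sqrt ((∫ p, (deriv (f p.1) p.2) ^ 2 ∂μ) + ∫ p, (deriv (g p.1) p.2) ^ 2 ∂μ) *
          Real.sqrt ((∫ p, (f p.1 p.2) ^ 2 ∂μ) + ∫ p, (g p.1 p.2) ^ 2 ∂μ)
        + (1 / b) * (Real.sqrt (∫ p, (f p.1 p.2) ^ 2 ∂μ) *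
            Real.sqrt (∫ p, (g p.1 p.2) ^ 2 ∂μ)) := by
  intro x₃ hx
  have hb0 : (0 : ℝ) < b := lt_of_lt_of_le one_pos hb
  subst hμ
  have hprod : (volume : Measure ((ℝ × ℝ) × ℝ)).restrict
      ((Set.univ : Set (ℝ × ℝ)) ×ˢ Set.Ico (0 : ℝ) b) =
      (volume : Measure (ℝ × ℝ)).prod (volume.restrict (Set.Ico (0 : ℝ) b)) := by
    rw [Measure.volume_eq_prod (ℝ × ℝ) ℝ, ← Measure.prod_restrict, Measure.restrict_univ]
  rw [hprod] at hf2 hg2 hdf2 hdg2 ⊢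
  set pm : Measure ((ℝ × ℝ) × ℝ) :=
    (volume : Measure (ℝ × ℝ)).prod (volume.restrict (Set.Ico (0 : ℝ) b)) with hpm
  -- a.e. measurability of absolute values
  have hmeas : ∀ (h : (ℝ × ℝ) → ℝ → ℝ),
      Integrable (fun p : (ℝ × ℝ) × ℝ => (h p.1 p.2) ^ 2) pm →
      AEMeasurable (fun p : (ℝ × ℝ) × ℝ => |h p.1 p.2|) pm := by
    intro h hint
    have h1 := hint.aemeasurable
    have h2 : AEMeasurable (fun p : (ℝ × ℝ) × ℝ => Real.sqrt ((h p.1 p.2) ^ 2)) pm :=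
      Real.continuous_sqrt.measurable.comp_aemeasurable h1
    simpa [Real.sqrt_sq_eq_abs] using h2
  have haf := hmeas f hf2
  have hag := hmeas g hg2
  have hadf := hmeas (fun xb => deriv (f xb)) hdf2
  have hadg := hmeas (fun xb => deriv (g xb)) hdg2
  have habs2 : ∀ x y : ℝ, |x| * |y| ≤ (x ^ 2 + y ^ 2) / 2 := fun x y => by
    nlinarith [sq_nonneg (|x| - |y|), sq_abs x, sq_abs y]
  have hprodint : ∀ (u v : (ℝ × ℝ) → ℝ → ℝ),
      Integrable (fun p : (ℝ × ℝ) × ℝ => (u p.1 p.2) ^ 2) pm →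
      Integrable (fun p : (ℝ × ℝ) × ℝ => (v p.1 p.2) ^ 2) pm →
      AEMeasurable (fun p : (ℝ × ℝ) × ℝ => |u p.1 p.2|) pm →
      AEMeasurable (fun p : (ℝ × ℝ) × ℝ => |v p.1 p.2|) pm →
      Integrable (fun p : (ℝ × ℝ) × ℝ => |u p.1 p.2| * |v p.1 p.2|) pm := by
    intro u v hu hv hmu hmv
    refine Integrable.mono' ((hu.add hv).div_const 2)
      (hmu.mul hmv).aestronglyMeasurable ?_
    refine Filter.Eventually.of_forall fun p => ?_
    rw [Real.norm_eq_abs, abs_of_nonneg (mul_nonneg (abs_nonneg _) (abs_nonneg _))]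
    exact habs2 _ _
  have hH1 := hprodint f g hf2 hg2 haf hag
  have hH2 := hprodint (fun xb => deriv (f xb)) g hdf2 hg2 hadf hag
  have hH3 := hprodint f (fun xb => deriv (g xb)) hf2 hdg2 haf hadg
  -- integrability of the averaged bound G
  have i1 : Integrable (fun xb : ℝ × ℝ =>
      ∫ t in Set.Ico (0 : ℝ) b, |f xb t| * |g xb t|) volume := by
    exact hH1.integral_prod_left
  have i23 : Integrable (fun xb : ℝ × ℝ => ∫ t in Set.Ico (0 : ℝ) b,
      (|deriv (f xb) t| * |g xb t| + |f xb t| * |deriv (g xb) t|)) volume := by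
    exact (hH2.add hH3).integral_prod_left
  have hGint : Integrable (fun xb : ℝ × ℝ =>
      (1 / b) * (∫ t in Set.Ico (0 : ℝ) b, |f xb t| * |g xb t|) +
      ∫ t in Set.Ico (0 : ℝ) b,
        (|deriv (f xb) t| * |g xb t| + |f xb t| * |deriv (g xb) t|)) volume :=
    (i1.const_mul (1 / b)).add i23
  -- a.e. pointwise bound
  have hae : ∀ᵐ xb ∂(volume : Measure (ℝ × ℝ)),
      |f xb x₃ * g xb x₃| ≤
      (1 / b) * (∫ t in Set.Ico (0 : ℝ) b, |f xb t| * |g xb t|) +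
      ∫ t in Set.Ico (0 : ℝ) b,
        (|deriv (f xb) t| * |g xb t| + |f xb t| * |deriv (g xb) t|) := by
    filter_upwards [hH1.prod_right_ae, hH2.prod_right_ae, hH3.prod_right_ae]
      with xb h1 h2 h3
    exact slice_bound hb0 (hfd xb) (hgd xb) h1 (h2.add h3) hx
  -- nonnegativity of all the squares' integrals
  have nf : 0 ≤ ∫ p, (f p.1 p.2) ^ 2 ∂pm := integral_nonneg fun p => sq_nonneg _
  have ng : 0 ≤ ∫ p, (g p.1 p.2) ^ 2 ∂pm := integral_nonneg fun p => sq_nonneg _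
  have ndf : 0 ≤ ∫ p, (deriv (f p.1) p.2) ^ 2 ∂pm := integral_nonneg fun p => sq_nonneg _
  have ndg : 0 ≤ ∫ p, (deriv (g p.1) p.2) ^ 2 ∂pm := integral_nonneg fun p => sq_nonneg _
  by_cases hI : Integrable (fun xb : ℝ × ℝ => f xb x₃ * g xb x₃) volume
  · -- Cauchy–Schwarz bounds
    have cs1 : ∫ p, |f p.1 p.2| * |g p.1 p.2| ∂pm ≤
        Real.sqrt (∫ p, (f p.1 p.2) ^ 2 ∂pm) * Real.sqrt (∫ p, (g p.1 p.2) ^ 2 ∂pm) :=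
      integral_abs_mul_le_sqrt hf2 hg2
    have cs2 : ∫ p, |deriv (f p.1) p.2| * |g p.1 p.2| ∂pm ≤
        Real.sqrt (∫ p, (deriv (f p.1) p.2) ^ 2 ∂pm) *
          Real.sqrt (∫ p, (g p.1 p.2) ^ 2 ∂pm) :=
      integral_abs_mul_le_sqrt hdf2 hg2
    have cs3 : ∫ p, |f p.1 p.2| * |deriv (g p.1) p.2| ∂pm ≤
        Real.sqrt (∫ p, (f p.1 p.2) ^ 2 ∂pm) *
          Real.sqrt (∫ p, (deriv (g p.1) p.2) ^ 2 ∂pm) :=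
      integral_abs_mul_le_sqrt hf2 hdg2
    have r2 := sqrt_r2_cs ndf ndg nf ng
    have step1 : |∫ xb : ℝ × ℝ, f xb x₃ * g xb x₃| ≤
        ∫ xb : ℝ × ℝ, |f xb x₃ * g xb x₃| := by
      simpa only [Real.norm_eq_abs] using
        norm_integral_le_integral_norm (μ := (volume : Measure (ℝ × ℝ)))
          (fun xb : ℝ × ℝ => f xb x₃ * g xb x₃)
    have step2 : ∫ xb : ℝ × ℝ, |f xb x₃ * g xb x₃| ≤
        ∫ xb : ℝ × ℝ, ((1 / b) * (∫ t in Set.Ico (0 : ℝ) b, |f xb t| * |g xb t|) +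
          ∫ t in Set.Ico (0 : ℝ) b,
            (|deriv (f xb) t| * |g xb t| + |f xb t| * |deriv (g xb) t|)) :=
      integral_mono_ae hI.abs hGint hae
    have e0 : ∫ xb : ℝ × ℝ, ((1 / b) * (∫ t in Set.Ico (0 : ℝ) b, |f xb t| * |g xb t|) +
          ∫ t in Set.Ico (0 : ℝ) b,
            (|deriv (f xb) t| * |g xb t| + |f xb t| * |deriv (g xb) t|)) =
        (1 / b) * (∫ xb : ℝ × ℝ, ∫ t in Set.Ico (0 : ℝ) b, |f xb t| * |g xb t|) +
        ∫ xb : ℝ × ℝ, ∫ t in Set.Ico (0 : ℝ) b,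
            (|deriv (f xb) t| * |g xb t| + |f xb t| * |deriv (g xb) t|) := by
      rw [integral_add (i1.const_mul (1 / b)) i23, integral_const_mul]
    have e1 : ∫ xb : ℝ × ℝ, ∫ t in Set.Ico (0 : ℝ) b, |f xb t| * |g xb t| =
        ∫ p, |f p.1 p.2| * |g p.1 p.2| ∂pm := by
      exact (integral_prod _ hH1).symm
    have e2 : ∫ xb : ℝ × ℝ, ∫ t in Set.Ico (0 : ℝ) b,
          (|deriv (f xb) t| * |g xb t| + |f xb t| * |deriv (g xb) t|) =
        (∫ p, |deriv (f p.1) p.2| * |g p.1 p.2| ∂pm) +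
          ∫ p, |f p.1 p.2| * |deriv (g p.1) p.2| ∂pm := by
      rw [show (∫ xb : ℝ × ℝ, ∫ t in Set.Ico (0 : ℝ) b,
          (|deriv (f xb) t| * |g xb t| + |f xb t| * |deriv (g xb) t|)) =
          ∫ p, (|deriv (f p.1) p.2| * |g p.1 p.2| + |f p.1 p.2| * |deriv (g p.1) p.2|) ∂pm
          from (integral_prod _ (hH2.add hH3)).symm]
      exact integral_add hH2 hH3
    have hmul : (1 / b) * (∫ p, |f p.1 p.2| * |g p.1 p.2| ∂pm) ≤
        (1 / b) * (Real.sqrt (∫ p, (f p.1 p.2) ^ 2 ∂pm) *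
          Real.sqrt (∫ p, (g p.1 p.2) ^ 2 ∂pm)) :=
      mul_le_mul_of_nonneg_left cs1 (by positivity)
    calc |∫ xb : ℝ × ℝ, f xb x₃ * g xb x₃|
        ≤ ∫ xb : ℝ × ℝ, |f xb x₃ * g xb x₃| := step1
      _ ≤ _ := step2
      _ = (1 / b) * (∫ p, |f p.1 p.2| * |g p.1 p.2| ∂pm) +
          ((∫ p, |deriv (f p.1) p.2| * |g p.1 p.2| ∂pm) +
            ∫ p, |f p.1 p.2| * |deriv (g p.1) p.2| ∂pm) := by rw [e0, e1, e2]
      _ ≤ _ := by linarith [hmul, cs2, cs3, r2]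
  · rw [integral_undef hI, abs_zero]
    have s1 := Real.sqrt_nonneg ((∫ p, (deriv (f p.1) p.2) ^ 2 ∂pm) +
      ∫ p, (deriv (g p.1) p.2) ^ 2 ∂pm)
    have s2 := Real.sqrt_nonneg ((∫ p, (f p.1 p.2) ^ 2 ∂pm) + ∫ p, (g p.1 p.2) ^ 2 ∂pm)
    have s3 := Real.sqrt_nonneg (∫ p, (f p.1 p.2) ^ 2 ∂pm)
    have s4 := Real.sqrt_nonneg (∫ p, (g p.1 p.2) ^ 2 ∂pm)
    have hbinv : (0:ℝ) ≤ 1 / b := by positivity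
    nlinarith [mul_nonneg s1 s2, mul_nonneg s3 s4, mul_nonneg hbinv (mul_nonneg s3 s4)]
end

section
/- Let T_M > 0, and let ρ, T : D → ℝ and u : D → ℝ³ be functions on a set D satisfying 0 < ρ ≤ ρ_max, |u| ≤ u_max, and T_M < T < 2T_M pointwise. Define M(p, v) = ρ(p) (2πT(p))^{-3/2} exp(-|v - u(p)|²/(2T(p))) and M_M(v) = (2πT_M)^{-3/2} exp(-|v|²/(2T_M)). Then for every z with 1/2 < z < 1 such that z < T_M / sup T, there exists C₂ > 0 with M(p, v) ≤ C₂ (M_M(v))^z for all p ∈ D and v ∈ ℝ³. -/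
open Real MeasureTheory

set_option maxHeartbeats 1000000 in
/-- Upper Gaussian comparison: a local Maxwellian with bounded density and velocity and
temperature trapped in `(T_M, 2T_M)` is dominated by `C₂ (M_M)^z` for any
`z ∈ (1/2, 1)` with `z < T_M / sup T`, where `M_M` is the global Maxwellian at
temperature `T_M`. -/
theorem maxwellian_upper_comparison {D : Type*}
    (T_M ρmax umax Tsup : ℝ) (hTM : 0 < T_M)
    (ρ T : D → ℝ) (u : D → EuclideanSpace ℝ (Fin 3))
    (hρ : ∀ p, 0 < ρ p ∧ ρ p ≤ ρmax)
    (hu : ∀ p, ‖u p‖ ≤ umax)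
    (hT : ∀ p, T_M < T p ∧ T p < 2 * T_M)
    (hTsup : ∀ p, T p ≤ Tsup)
    (z : ℝ) (hz1 : 1 / 2 < z) (hz2 : z < 1) (hz3 : z < T_M / Tsup) :
    ∃ C₂ : ℝ, 0 < C₂ ∧ ∀ p : D, ∀ v : EuclideanSpace ℝ (Fin 3),
      ρ p * (2 * π * T p) ^ (-(3 : ℝ) / 2) * Real.exp (-‖v - u p‖ ^ 2 / (2 * T p))
        ≤ C₂ * ((2 * π * T_M) ^ (-(3 : ℝ) / 2) * Real.exp (-‖v‖ ^ 2 / (2 * T_M))) ^ z := by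
  have hzpos : 0 < z := by linarith
  have hTsup_pos : 0 < Tsup := by
    by_contra h
    push_neg at h
    have : T_M / Tsup ≤ 0 := div_nonpos_of_nonneg_of_nonpos hTM.le h
    linarith
  have hzT : z * Tsup < T_M := (lt_div_iff₀ hTsup_pos).mp hz3
  set θ : ℝ := 1 - z * Tsup / T_M with hθdef
  have hθpos : 0 < θ := by
    have h1 : z * Tsup / T_M < 1 := (div_lt_one hTM).mpr hzT
    rw [hθdef]
    linarith
  have h1θ : (1 - θ) * T_M = z * Tsup := by
    rw [hθdef]
    field_simp
    ring
  set A : ℝ := 2 * π * T_M with hAdef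
  have hApos : 0 < A := by positivity
  set Cst : ℝ := umax ^ 2 / (2 * θ * T_M) with hCdef
  refine ⟨max 1 (ρmax * Real.exp Cst * A ^ ((3 * z - 3) / 2 : ℝ)), lt_max_of_lt_left one_pos, ?_⟩
  intro p v
  obtain ⟨hρp, hρmax⟩ := hρ p
  obtain ⟨hTl, hTr⟩ := hT p
  have hTp : 0 < T p := lt_trans hTM hTl
  have hbu : ‖u p‖ ≤ umax := hu p
  have hb0 : (0:ℝ) ≤ ‖u p‖ := norm_nonneg _
  have humax : 0 ≤ umax := le_trans hb0 hbu
  set a : ℝ := ‖v‖ with hadef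
  set b : ℝ := ‖u p‖ with hbdef
  set d : ℝ := ‖v - u p‖ ^ 2 with hddef
  have hd0 : (0:ℝ) ≤ d := by positivity
  have hab : (a - b) ^ 2 ≤ d := by
    have h2 : |a - b| ≤ ‖v - u p‖ := abs_norm_sub_norm_le v (u p)
    calc (a - b) ^ 2 = |a - b| ^ 2 := by rw [sq_abs]
      _ ≤ ‖v - u p‖ ^ 2 := by
          apply pow_le_pow_left₀ (abs_nonneg _) h2
  -- key: d * θ ≥ (1-θ)*θ*a^2 - b^2
  have hkey1 : (1 - θ) * θ * a ^ 2 - b ^ 2 ≤ d * θ := by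
    nlinarith [sq_nonneg (θ * a - b), hθpos, hab]
  -- main: z*a^2*θ*(T p) - umax^2*(T p) ≤ d*θ*T_M
  have hkey2 : z * a ^ 2 * θ * T p - umax ^ 2 * T p ≤ d * θ * T_M := by
    have hTpTsup : T p ≤ Tsup := hTsup p
    have e1 : (1 - θ) * T_M * (θ * a ^ 2) = z * Tsup * (θ * a ^ 2) := by rw [h1θ]
    have e2 : z * T p * (θ * a ^ 2) ≤ z * Tsup * (θ * a ^ 2) := by
      apply mul_le_mul_of_nonneg_right (by nlinarith) (by positivity)
    have hb2 : b ^ 2 ≤ umax ^ 2 := pow_le_pow_left₀ hb0 hbu 2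
    have e3 : b ^ 2 * T_M ≤ umax ^ 2 * T p := mul_le_mul hb2 hTl.le hTM.le (sq_nonneg umax)
    have e4 : ((1 - θ) * θ * a ^ 2 - b ^ 2) * T_M ≤ d * θ * T_M :=
      mul_le_mul_of_nonneg_right hkey1 hTM.le
    linarith [e1, e2, e3, e4]
  -- exponential comparison
  have hexp : Real.exp (-d / (2 * T p)) ≤ Real.exp Cst * Real.exp (z * (-a ^ 2 / (2 * T_M))) := by
    rw [← Real.exp_add]
    apply Real.exp_le_exp.mpr
    rw [hCdef, ← sub_nonneg]
    have expand : umax ^ 2 / (2 * θ * T_M) + z * (-a ^ 2 / (2 * T_M)) - -d / (2 * T p)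
        = (umax ^ 2 * (T p) - z * a ^ 2 * θ * (T p) + d * θ * T_M) / (2 * θ * T_M * T p) := by
      field_simp
      ring
    rw [expand]
    apply div_nonneg _ (by positivity)
    linarith
  have hrpow : (2 * π * T p) ^ (-(3:ℝ) / 2) ≤ A ^ (-(3:ℝ) / 2) := by
    apply Real.rpow_le_rpow_of_nonpos hApos
    · rw [hAdef]
      exact mul_le_mul_of_nonneg_left hTl.le (by positivity)
    · norm_num
  have hRHS : ((2 * π * T_M) ^ (-(3 : ℝ) / 2) * Real.exp (-‖v‖ ^ 2 / (2 * T_M))) ^ z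
      = A ^ (-(3:ℝ) / 2 * z) * Real.exp (z * (-a ^ 2 / (2 * T_M))) := by
    rw [Real.mul_rpow (by positivity) (Real.exp_nonneg _), ← Real.rpow_mul hApos.le,
      ← Real.exp_mul, mul_comm ((-a ^ 2 / (2 * T_M))) z]
  rw [hRHS]
  calc ρ p * (2 * π * T p) ^ (-(3 : ℝ) / 2) * Real.exp (-d / (2 * T p))
      ≤ ρmax * A ^ (-(3:ℝ)/2) * (Real.exp Cst * Real.exp (z * (-a ^ 2 / (2 * T_M)))) := by
        apply mul_le_mul _ hexp (Real.exp_nonneg _)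
          (mul_nonneg (le_trans hρp.le hρmax) (Real.rpow_nonneg hApos.le _))
        apply mul_le_mul hρmax hrpow (Real.rpow_nonneg (by positivity) _)
          (le_trans hρp.le hρmax)
    _ = (ρmax * Real.exp Cst * A ^ ((3 * z - 3) / 2 : ℝ)) *
        (A ^ (-(3:ℝ)/2 * z) * Real.exp (z * (-a ^ 2 / (2 * T_M)))) := by
        have hAsum : A ^ ((3 * z - 3) / 2 : ℝ) * A ^ (-(3:ℝ)/2 * z) = A ^ (-(3:ℝ)/2) := by
          rw [← Real.rpow_add hApos]
          norm_num
          ring_nf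
        rw [← hAsum]
        ring
    _ ≤ max 1 (ρmax * Real.exp Cst * A ^ ((3 * z - 3) / 2 : ℝ)) *
        (A ^ (-(3:ℝ)/2 * z) * Real.exp (z * (-a ^ 2 / (2 * T_M)))) := by
        apply mul_le_mul_of_nonneg_right (le_max_right _ _) (by positivity)
end

section
/- For every γ ∈ [0, 1] there exist constants 0 < c ≤ C such that for all v ∈ ℝ³, c (1 + |v|)^γ ≤ ∫_{ℝ³} |v - u|^γ e^{-|u|²/2} du ≤ C (1 + |v|)^γ. -/
open Real MeasureTheory

open Metric

lemma integrable_gauss (b : ℝ) (hb : 0 < b) :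
    Integrable (fun u : EuclideanSpace ℝ (Fin 3) => rexp (-b * ‖u‖ ^ 2)) := by
  have h := (GaussianFourier.integrable_cexp_neg_mul_sq_norm_add
    (V := EuclideanSpace ℝ (Fin 3)) (b := (b:ℂ)) (by simpa) 0 0).norm
  simpa [Complex.norm_exp, ← Complex.ofReal_pow] using h

lemma integrable_onePlus :
    Integrable (fun u : EuclideanSpace ℝ (Fin 3) => (1 + ‖u‖) * rexp (-‖u‖ ^ 2 / 2)) := by
  refine Integrable.mono' ((integrable_gauss (1/4) (by norm_num)).const_mul 2)
    ?_ (Filter.Eventually.of_forall fun u => ?_)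
  · exact (Continuous.aestronglyMeasurable (by continuity))
  · have h0 : (0:ℝ) ≤ (1 + ‖u‖) * rexp (-‖u‖ ^ 2 / 2) :=
      mul_nonneg (by positivity) (exp_pos _).le
    rw [Real.norm_of_nonneg h0]
    have h1 : 1 + ‖u‖ ≤ 2 * rexp (‖u‖ ^ 2 / 4) := by
      have := Real.add_one_le_exp (‖u‖ ^ 2 / 4)
      nlinarith [norm_nonneg u, sq_nonneg (‖u‖ - 1)]
    calc (1 + ‖u‖) * rexp (-‖u‖ ^ 2 / 2)
        ≤ (2 * rexp (‖u‖ ^ 2 / 4)) * rexp (-‖u‖ ^ 2 / 2) :=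
          mul_le_mul_of_nonneg_right h1 (exp_pos _).le
      _ = 2 * rexp (-(1/4) * ‖u‖ ^ 2) := by
          rw [mul_assoc, ← Real.exp_add]; ring_nf

-- key pointwise bound
lemma pointwise_upper {γ : ℝ} (hγ0 : 0 ≤ γ) (hγ1 : γ ≤ 1)
    (v u : EuclideanSpace ℝ (Fin 3)) :
    ‖v - u‖ ^ γ * rexp (-‖u‖ ^ 2 / 2) ≤
      (1 + ‖v‖) ^ γ * ((1 + ‖u‖) * rexp (-‖u‖ ^ 2 / 2)) := by
  have h1 : ‖v - u‖ ≤ (1 + ‖v‖) * (1 + ‖u‖) := by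
    have := norm_sub_le v u
    nlinarith [norm_nonneg v, norm_nonneg u]
  have h2 : ‖v - u‖ ^ γ ≤ ((1 + ‖v‖) * (1 + ‖u‖)) ^ γ :=
    Real.rpow_le_rpow (norm_nonneg _) h1 hγ0
  have h3 : ((1 + ‖v‖) * (1 + ‖u‖)) ^ γ = (1 + ‖v‖) ^ γ * (1 + ‖u‖) ^ γ :=
    Real.mul_rpow (by positivity) (by positivity)
  have h4 : (1 + ‖u‖) ^ γ ≤ 1 + ‖u‖ := by
    calc (1 + ‖u‖) ^ γ ≤ (1 + ‖u‖) ^ (1:ℝ) :=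
      Real.rpow_le_rpow_of_exponent_le (by linarith [norm_nonneg u]) hγ1
    _ = 1 + ‖u‖ := Real.rpow_one _
  calc ‖v - u‖ ^ γ * rexp (-‖u‖ ^ 2 / 2)
      ≤ ((1 + ‖v‖) ^ γ * (1 + ‖u‖) ^ γ) * rexp (-‖u‖ ^ 2 / 2) := by
        rw [← h3]; exact mul_le_mul_of_nonneg_right h2 (exp_pos _).le
    _ ≤ (1 + ‖v‖) ^ γ * ((1 + ‖u‖) * rexp (-‖u‖ ^ 2 / 2)) := by
        rw [mul_assoc]
        exact mul_le_mul_of_nonneg_left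
          (mul_le_mul_of_nonneg_right h4 (exp_pos _).le)
          (Real.rpow_nonneg (by positivity) _)

lemma integrable_f {γ : ℝ} (hγ0 : 0 ≤ γ) (hγ1 : γ ≤ 1) (v : EuclideanSpace ℝ (Fin 3)) :
    Integrable (fun u : EuclideanSpace ℝ (Fin 3) =>
      ‖v - u‖ ^ γ * rexp (-‖u‖ ^ 2 / 2)) := by
  refine Integrable.mono' (integrable_onePlus.const_mul ((1 + ‖v‖) ^ γ))
    ?_ (Filter.Eventually.of_forall fun u => ?_)
  · apply Continuous.aestronglyMeasurable
    exact ((Real.continuous_rpow_const hγ0).comp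
      ((continuous_const.sub continuous_id).norm)).mul (by continuity)
  · rw [Real.norm_of_nonneg (mul_nonneg (Real.rpow_nonneg (norm_nonneg _) _) (exp_pos _).le)]
    exact pointwise_upper hγ0 hγ1 v u

/-- Hard-potential collision frequency equivalence: for `0 ≤ γ ≤ 1`, the convolution of
`|·|^γ` with a standard Gaussian is comparable to `(1 + |v|)^γ`. -/
theorem collision_frequency_equivalence (γ : ℝ) (hγ0 : 0 ≤ γ) (hγ1 : γ ≤ 1) :
    ∃ c C : ℝ, 0 < c ∧ c ≤ C ∧ ∀ v : EuclideanSpace ℝ (Fin 3),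
      c * (1 + ‖v‖) ^ γ ≤
        (∫ u : EuclideanSpace ℝ (Fin 3), ‖v - u‖ ^ γ * Real.exp (-‖u‖ ^ 2 / 2)) ∧
      (∫ u : EuclideanSpace ℝ (Fin 3), ‖v - u‖ ^ γ * Real.exp (-‖u‖ ^ 2 / 2)) ≤
        C * (1 + ‖v‖) ^ γ := by
  set w : EuclideanSpace ℝ (Fin 3) := EuclideanSpace.single 0 (5:ℝ) with hw
  have hwn : ‖w‖ = 5 := by rw [hw, EuclideanSpace.norm_single]; norm_num
  set V₁ : ℝ := (volume (closedBall w 1)).toReal with hV₁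
  set V₀ : ℝ := (volume (closedBall (0 : EuclideanSpace ℝ (Fin 3)) 1)).toReal with hV₀
  have hV₁pos : 0 < V₁ :=
    ENNReal.toReal_pos (measure_closedBall_pos volume w one_pos).ne'
      (measure_closedBall_lt_top).ne
  have hV₀pos : 0 < V₀ :=
    ENNReal.toReal_pos (measure_closedBall_pos volume _ one_pos).ne'
      (measure_closedBall_lt_top).ne
  set K : ℝ := ∫ u : EuclideanSpace ℝ (Fin 3), (1 + ‖u‖) * rexp (-‖u‖ ^ 2 / 2) with hK
  set c : ℝ := min (rexp (-18) * V₁ / 4) (rexp (-(1:ℝ)/2) / 2 * V₀) with hc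
  have hcpos : 0 < c := by
    apply lt_min
    · positivity
    · positivity
  refine ⟨c, max K c, hcpos, le_max_right _ _, fun v => ?_⟩
  have hfint := integrable_f hγ0 hγ1 v
  have hfnn : ∀ u : EuclideanSpace ℝ (Fin 3),
      0 ≤ ‖v - u‖ ^ γ * rexp (-‖u‖ ^ 2 / 2) :=
    fun u => mul_nonneg (Real.rpow_nonneg (norm_nonneg _) _) (exp_pos _).le
  have hb1 : (1:ℝ) ≤ 1 + ‖v‖ := by linarith [norm_nonneg v]
  constructor
  · -- lower bound
    rcases le_or_gt ‖v‖ 3 with hv | hv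
    · -- small v : integrate over closedBall w 1
      have hset : ∀ u ∈ closedBall w 1, rexp (-18) ≤ ‖v - u‖ ^ γ * rexp (-‖u‖ ^ 2 / 2) := by
        intro u hu
        rw [mem_closedBall, dist_eq_norm] at hu
        have hun1 : ‖u‖ ≤ 6 := by
          have := norm_sub_norm_le u w
          have h := abs_le.mp (abs_norm_sub_norm_le u w)
          calc ‖u‖ ≤ ‖w‖ + ‖u - w‖ := by linarith [h.2]
            _ ≤ 6 := by rw [hwn]; linarith
        have hun2 : 4 ≤ ‖u‖ := by
          have h := abs_le.mp (abs_norm_sub_norm_le w u)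
          have : ‖u - w‖ = ‖w - u‖ := by rw [norm_sub_rev]
          linarith [h.2, hwn ▸ (by linarith [h.2] : ‖w‖ - ‖u‖ ≤ ‖w - u‖)]
        have hvu : 1 ≤ ‖v - u‖ := by
          have h := norm_sub_norm_le u v
          have : ‖u - v‖ = ‖v - u‖ := norm_sub_rev _ _
          linarith
        have h1 : 1 ≤ ‖v - u‖ ^ γ := Real.one_le_rpow hvu hγ0
        have h2 : rexp (-18) ≤ rexp (-‖u‖ ^ 2 / 2) := by
          apply Real.exp_le_exp.mpr
          nlinarith
        calc rexp (-18) = 1 * rexp (-18) := (one_mul _).symm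
          _ ≤ ‖v - u‖ ^ γ * rexp (-‖u‖ ^ 2 / 2) :=
            mul_le_mul h1 h2 (exp_pos _).le (by linarith [Real.rpow_nonneg (norm_nonneg (v-u)) γ])
      have h1 : rexp (-18) * V₁ ≤
          ∫ u in closedBall w 1, ‖v - u‖ ^ γ * rexp (-‖u‖ ^ 2 / 2) :=
        by have h := setIntegral_ge_of_const_le measurableSet_closedBall measure_closedBall_lt_top.ne
             hset hfint.integrableOn
           rw [smul_eq_mul, mul_comm] at h; exact h
      have h2 := setIntegral_le_integral (s := closedBall w 1) hfint (Filter.Eventually.of_forall hfnn)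
      have h3 : (1 + ‖v‖) ^ γ ≤ 4 := by
        calc (1 + ‖v‖) ^ γ ≤ (1 + ‖v‖) ^ (1:ℝ) :=
          Real.rpow_le_rpow_of_exponent_le hb1 hγ1
        _ = 1 + ‖v‖ := Real.rpow_one _
        _ ≤ 4 := by linarith
      have h4 : c * (1 + ‖v‖) ^ γ ≤ rexp (-18) * V₁ / 4 * 4 :=
        mul_le_mul (min_le_left _ _) h3 (Real.rpow_nonneg (by linarith) _) (by positivity)
      calc c * (1 + ‖v‖) ^ γ ≤ rexp (-18) * V₁ / 4 * 4 := h4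
        _ = rexp (-18) * V₁ := by ring
        _ ≤ _ := le_trans h1 h2
    · -- large v : integrate over closedBall 0 1
      have hset : ∀ u ∈ closedBall (0 : EuclideanSpace ℝ (Fin 3)) 1,
          ((1 + ‖v‖)/2) ^ γ * rexp (-(1:ℝ)/2) ≤ ‖v - u‖ ^ γ * rexp (-‖u‖ ^ 2 / 2) := by
        intro u hu
        rw [mem_closedBall, dist_zero_right] at hu
        have hvu : (1 + ‖v‖)/2 ≤ ‖v - u‖ := by
          have h := norm_sub_norm_le v u
          have : ‖v‖ - ‖u‖ ≤ ‖v - u‖ := by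
            have := abs_le.mp (abs_norm_sub_norm_le v u)
            linarith [this.2]
          linarith
        have h1 : ((1 + ‖v‖)/2) ^ γ ≤ ‖v - u‖ ^ γ :=
          Real.rpow_le_rpow (by positivity) hvu hγ0
        have h2 : rexp (-(1:ℝ)/2) ≤ rexp (-‖u‖ ^ 2 / 2) := by
          apply Real.exp_le_exp.mpr
          nlinarith [norm_nonneg u]
        exact mul_le_mul h1 h2 (exp_pos _).le (Real.rpow_nonneg (norm_nonneg _) _)
      have h1 : ((1 + ‖v‖)/2) ^ γ * rexp (-(1:ℝ)/2) * V₀ ≤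
          ∫ u in closedBall (0 : EuclideanSpace ℝ (Fin 3)) 1,
            ‖v - u‖ ^ γ * rexp (-‖u‖ ^ 2 / 2) :=
        by have h := setIntegral_ge_of_const_le measurableSet_closedBall measure_closedBall_lt_top.ne
             hset hfint.integrableOn
           rw [smul_eq_mul, mul_comm] at h; exact h
      have h2 := setIntegral_le_integral (s := closedBall (0 : EuclideanSpace ℝ (Fin 3)) 1) hfint (Filter.Eventually.of_forall hfnn)
      have h3 : (1 + ‖v‖) ^ γ / 2 ≤ ((1 + ‖v‖)/2) ^ γ := by
        rw [Real.div_rpow (by linarith) (by norm_num)]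
        apply div_le_div_of_nonneg_left (Real.rpow_nonneg (by linarith) _) (by positivity)
        calc (2:ℝ) ^ γ ≤ (2:ℝ) ^ (1:ℝ) := Real.rpow_le_rpow_of_exponent_le one_le_two hγ1
          _ = 2 := Real.rpow_one _
      have h4 : c * (1 + ‖v‖) ^ γ ≤ ((1 + ‖v‖)/2) ^ γ * rexp (-(1:ℝ)/2) * V₀ := by
        have hcle : c ≤ rexp (-(1:ℝ)/2) / 2 * V₀ := min_le_right _ _
        calc c * (1 + ‖v‖) ^ γ ≤ (rexp (-(1:ℝ)/2) / 2 * V₀) * (1 + ‖v‖) ^ γ :=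
            mul_le_mul_of_nonneg_right hcle (Real.rpow_nonneg (by linarith) _)
          _ = ((1 + ‖v‖) ^ γ / 2) * rexp (-(1:ℝ)/2) * V₀ := by ring
          _ ≤ ((1 + ‖v‖)/2) ^ γ * rexp (-(1:ℝ)/2) * V₀ := by
            apply mul_le_mul_of_nonneg_right _ hV₀pos.le
            exact mul_le_mul_of_nonneg_right h3 (exp_pos _).le
      exact h4.trans (h1.trans h2)
  · -- upper bound
    have h1 : (∫ u : EuclideanSpace ℝ (Fin 3), ‖v - u‖ ^ γ * rexp (-‖u‖ ^ 2 / 2)) ≤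
        ∫ u : EuclideanSpace ℝ (Fin 3), (1 + ‖v‖) ^ γ * ((1 + ‖u‖) * rexp (-‖u‖ ^ 2 / 2)) :=
      integral_mono hfint (integrable_onePlus.const_mul _)
        (fun u => pointwise_upper hγ0 hγ1 v u)
    rw [integral_const_mul] at h1
    calc (∫ u : EuclideanSpace ℝ (Fin 3), ‖v - u‖ ^ γ * rexp (-‖u‖ ^ 2 / 2))
        ≤ (1 + ‖v‖) ^ γ * K := h1
      _ = K * (1 + ‖v‖) ^ γ := mul_comm _ _
      _ ≤ max K c * (1 + ‖v‖) ^ γ :=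
        mul_le_mul_of_nonneg_right (le_max_left _ _) (Real.rpow_nonneg (by linarith) _)
end
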